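/- arXiv:1103.3468 — 3 statements merged into one kernel-verified Lean document; each statement's English description precedes it below -/
import Mathlib

section
/- Let S(m,n) = (1/(√(2π)·m!)) ∫₀^∞ He_m(x) He_n(x) e^{−x²/2} dx. For n ≥ 1, S(0,n) = He_{n−1}(0)/√(2π), and for m ≥ 1, S(m,0) = He_{m−1}(0)/(√(2π)·m!). -/
open MeasureTheory Real

/-- Probabilists' Hermite polynomial `He n x`, with the convention `He n ≡ 0` for `n < 0`. -/
noncomputable def He (n : ℤ) (x : ℝ) : ℝ :=
  if n < 0 then 0 else Polynomial.aeval x (Polynomial.hermite n.toNat)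

/-- `S m n = (1/(√(2π)·m!)) ∫₀^∞ He_m(x) He_n(x) e^{−x²/2} dx`. -/
noncomputable def S (m n : ℕ) : ℝ :=
  (1 / (Real.sqrt (2 * Real.pi) * (Nat.factorial m))) *
    ∫ x in Set.Ioi (0 : ℝ), He m x * He n x * Real.exp (-x ^ 2 / 2)

open Polynomial Filter Set Topology

/-! Since `(He_n(x) e^{-x²/2})' = -He_{n+1}(x) e^{-x²/2}` and polynomials times a Gaussian
are integrable on `(0, ∞)` and vanish at infinity, `∫₀^∞ He_{n+1} e^{-x²/2} = He_n(0)`.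
With `He_0 = 1` both `S(0, n)` and `S(m, 0)` are integrals of this form. -/

section PolynomialMulGaussian

variable {b : ℝ}

lemma integrableOn_pow_mul_exp_neg_mul_sq (hb : 0 < b) (k : ℕ) :
    IntegrableOn (fun x : ℝ => x ^ k * exp (-b * x ^ 2)) (Ioi 0) := by
  have hk : (-1 : ℝ) < k := by linarith [k.cast_nonneg (α := ℝ)]
  simpa only [rpow_natCast] using integrableOn_rpow_mul_exp_neg_mul_sq hb hk

lemma tendsto_pow_mul_exp_neg_mul_sq_atTop (hb : 0 < b) (k : ℕ) :
    Tendsto (fun x : ℝ => x ^ k * exp (-b * x ^ 2)) atTop (𝓝 0) := by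
  have hexp : Tendsto (fun x : ℝ => exp (-(1 / 2) * x)) atTop (𝓝 0) :=
    tendsto_exp_atBot.comp (tendsto_id.const_mul_atTop_of_neg (by norm_num))
  simpa only [rpow_natCast] using
    (rpow_mul_exp_neg_mul_sq_isLittleO_exp_neg hb k).trans_tendsto hexp

variable {R : Type*} [CommSemiring R] [Algebra R ℝ]

lemma aeval_mul_eq_sum_range (p : R[X]) (f : ℝ → ℝ) :
    (fun x => aeval x p * f x) =
      fun x => ∑ i ∈ Finset.range (p.natDegree + 1),
        algebraMap R ℝ (p.coeff i) * (x ^ i * f x) := by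
  funext x
  simp only [aeval_eq_sum_range, Finset.sum_mul, Algebra.smul_def, mul_assoc]

lemma integrableOn_aeval_mul_exp_neg_mul_sq (hb : 0 < b) (p : R[X]) :
    IntegrableOn (fun x : ℝ => aeval x p * exp (-b * x ^ 2)) (Ioi 0) := by
  rw [aeval_mul_eq_sum_range]
  exact integrable_finsetSum _ fun i _ =>
    (integrableOn_pow_mul_exp_neg_mul_sq hb i).const_mul _

lemma tendsto_aeval_mul_exp_neg_mul_sq_atTop (hb : 0 < b) (p : R[X]) :
    Tendsto (fun x : ℝ => aeval x p * exp (-b * x ^ 2)) atTop (𝓝 0) := by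
  rw [aeval_mul_eq_sum_range]
  simpa using tendsto_finsetSum (Finset.range (p.natDegree + 1)) fun i _ =>
    (tendsto_pow_mul_exp_neg_mul_sq_atTop hb i).const_mul (algebraMap R ℝ (p.coeff i))

end PolynomialMulGaussian

lemma hasDerivAt_hermite_mul_gaussian (n : ℕ) (x : ℝ) :
    HasDerivAt (fun x => aeval x (hermite n) * exp (-x ^ 2 / 2))
      (-(aeval x (hermite (n + 1)) * exp (-x ^ 2 / 2))) x := by
  have hexponent : HasDerivAt (fun x : ℝ => -x ^ 2 / 2) (-x) x := by
    simpa using ((hasDerivAt_pow 2 x).neg.div_const 2).congr_deriv (by ring)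
  refine (((hermite n).hasDerivAt_aeval x).mul hexponent.exp).congr_deriv ?_
  rw [hermite_succ, map_sub, map_mul, aeval_X]
  ring

theorem integral_Ioi_hermite_succ_mul_gaussian (n : ℕ) :
    ∫ x in Ioi (0 : ℝ), aeval x (hermite (n + 1)) * exp (-x ^ 2 / 2) = aeval 0 (hermite n) := by
  have hcont : ContinuousWithinAt (fun x : ℝ => -(aeval x (hermite n) * exp (-x ^ 2 / 2)))
      (Ici 0) 0 := by fun_prop
  have hint := integrableOn_aeval_mul_exp_neg_mul_sq one_half_pos (hermite (n + 1))
  have hlim := (tendsto_aeval_mul_exp_neg_mul_sq_atTop one_half_pos (hermite n)).neg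
  have hweight (x : ℝ) : -(1 / 2) * x ^ 2 = -x ^ 2 / 2 := by ring
  simp only [hweight, neg_zero] at hint hlim
  rw [integral_Ioi_of_hasDerivAt_of_tendsto hcont
    (fun x _ => (hasDerivAt_hermite_mul_gaussian n x).neg.congr_deriv (neg_neg _)) hint hlim]
  simp

lemma He_natCast (n : ℕ) (x : ℝ) : He n x = aeval x (hermite n) := by
  simp [He]

lemma He_zero (x : ℝ) : He 0 x = 1 := by
  simp [He]

lemma integral_Ioi_He_mul_gaussian {n : ℕ} (hn : 1 ≤ n) :
    ∫ x in Ioi (0 : ℝ), He n x * exp (-x ^ 2 / 2) = He ((n : ℤ) - 1) 0 := by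
  obtain ⟨k, rfl⟩ := Nat.exists_eq_add_of_le' hn
  simp only [He_natCast, Nat.cast_add, Nat.cast_one, add_sub_cancel_right]
  exact integral_Ioi_hermite_succ_mul_gaussian k

/-- For `n ≥ 1`, `S(0,n) = He_{n−1}(0)/√(2π)`; for `m ≥ 1`,
`S(m,0) = He_{m−1}(0)/(√(2π)·m!)`. -/
theorem S_zero_left_and_right :
    (∀ n : ℕ, 1 ≤ n → S 0 n = He ((n : ℤ) - 1) 0 / Real.sqrt (2 * Real.pi)) ∧
    (∀ m : ℕ, 1 ≤ m →
      S m 0 = He ((m : ℤ) - 1) 0 / (Real.sqrt (2 * Real.pi) * (Nat.factorial m))) := by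
  constructor
  · intro n hn
    simp only [S, Nat.cast_zero, He_zero, one_mul, integral_Ioi_He_mul_gaussian hn,
      Nat.factorial_zero, Nat.cast_one, mul_one, one_div_mul_eq_div]
  · intro m hm
    simp only [S, Nat.cast_zero, He_zero, mul_one, integral_Ioi_He_mul_gaussian hm,
      one_div_mul_eq_div]
end

section
/- Let τ > 0 and Pr be real constants, t₀ ∈ ℝ, and let g_{ij} : [t₀, ∞) → ℝ (for i, j ∈ {1,2,3}) be differentiable functions satisfying the collision-only Shakhov moment system g_{ij}'(t) = (1/τ)[((1 − Pr)/5) q_i(t) − g_{ij}(t)], where q_i(t) = 2 g_{ii}(t) + Σ_{d=1}^3 g_{id}(t). Then for all t ≥ t₀ and each i ∈ {1,2,3}, q_i(t) = q_i(t₀) exp(−Pr (t − t₀)/τ). -/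
/-!
Adding twice the equation for `g_{ii}` to the equations for `g_{i1}, g_{i2}, g_{i3}` shows that the
heat flux obeys the closed scalar equation `q_i' = ((3 + 2) (1 - Pr) / 5 - 1) q_i / τ = -Pr q_i / τ`.
A solution of `q' = c q` on `[t₀, ∞)` is `q(t₀) exp (c (t - t₀))`, because `exp (-c (t - t₀)) q(t)`
has zero right derivative and is therefore constant.
-/

open Set

theorem eq_exp_mul_smul_of_hasDerivWithinAt_Ici {E : Type*} [NormedAddCommGroup E]
    [NormedSpace ℝ E] {c t₀ : ℝ} {q : ℝ → E}
    (hq : ∀ t, t₀ ≤ t → HasDerivWithinAt q (c • q t) (Ici t₀) t) :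
    ∀ t, t₀ ≤ t → q t = Real.exp (c * (t - t₀)) • q t₀ := by
  set h : ℝ → E := fun s => Real.exp (-c * (s - t₀)) • q s
  have h_deriv : ∀ s, t₀ ≤ s → HasDerivWithinAt h 0 (Ici t₀) s := by
    intro s hs
    have he : HasDerivAt (fun s => Real.exp (-c * (s - t₀))) (Real.exp (-c * (s - t₀)) * -c) s := by
      simpa using (((hasDerivAt_id s).sub_const t₀).const_mul (-c)).exp
    refine (he.hasDerivWithinAt.fun_smul (hq s hs)).congr_deriv ?_
    rw [smul_smul, ← add_smul]
    simp
  intro t ht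
  have h_const : h t = h t₀ :=
    constant_of_has_deriv_right_zero
      (fun s hs => (h_deriv s hs.1).continuousWithinAt.mono Icc_subset_Ici_self)
      (fun s hs => (h_deriv s hs.1).mono (Ici_subset_Ici.2 hs.1)) t ⟨ht, le_rfl⟩
  simp only [h, sub_self, mul_zero, Real.exp_zero, one_smul] at h_const
  rw [← h_const, smul_smul, ← Real.exp_add]
  simp

def heatFlux {n : ℕ} (g : Fin n → Fin n → ℝ → ℝ) (i : Fin n) (t : ℝ) : ℝ :=
  2 * g i i t + ∑ d, g i d t

theorem hasDerivWithinAt_heatFlux {n : ℕ} {g : Fin n → Fin n → ℝ → ℝ} {i : Fin n}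
    {τ κ t : ℝ} {s : Set ℝ}
    (hg : ∀ j, HasDerivWithinAt (g i j) ((1 / τ) * (κ * heatFlux g i t - g i j t)) s t) :
    HasDerivWithinAt (heatFlux g i) ((1 / τ) * ((n + 2) * κ - 1) * heatFlux g i t) s t := by
  refine (((hg i).const_mul 2).fun_add (HasDerivWithinAt.fun_sum fun j _ => hg j)).congr_deriv ?_
  simp only [← Finset.mul_sum, Finset.sum_sub_distrib, Finset.sum_const, Finset.card_univ,
    Fintype.card_fin, nsmul_eq_mul, heatFlux]
  ring

theorem shakhov_heat_flux_decay_general (τ Pr t₀ : ℝ)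
    (g : Fin 3 → Fin 3 → ℝ → ℝ)
    (hg : ∀ i j : Fin 3, ∀ t : ℝ, t₀ ≤ t →
      HasDerivWithinAt (g i j)
        ((1 / τ) * ((1 - Pr) / 5 * (2 * g i i t + ∑ d, g i d t) - g i j t))
        (Set.Ici t₀) t) :
    ∀ i : Fin 3, ∀ t : ℝ, t₀ ≤ t →
      2 * g i i t + ∑ d, g i d t =
        (2 * g i i t₀ + ∑ d, g i d t₀) * Real.exp (-Pr * (t - t₀) / τ) := by
  intro i t ht
  have h_flux : ∀ s, t₀ ≤ s →
      HasDerivWithinAt (heatFlux g i) (-Pr / τ * heatFlux g i s) (Ici t₀) s := fun s hs =>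
    (hasDerivWithinAt_heatFlux (κ := (1 - Pr) / 5) (hg i · s hs)).congr_deriv (by push_cast; ring)
  change heatFlux g i t = heatFlux g i t₀ * _
  rw [eq_exp_mul_smul_of_hasDerivWithinAt_Ici h_flux t ht, smul_eq_mul, mul_comm]
  congr 2
  ring

/-- For solutions of the collision-only Shakhov moment system
`g_{ij}' = (1/τ)[((1−Pr)/5) q_i − g_{ij}]` with `q_i = 2g_{ii} + Σ_d g_{id}`,
the heat flux decays as `q_i(t) = q_i(t₀) exp(−Pr(t−t₀)/τ)`. -/
theorem shakhov_heat_flux_decay (τ Pr t₀ : ℝ) (hτ : 0 < τ)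
    (g : Fin 3 → Fin 3 → ℝ → ℝ)
    (hg : ∀ i j : Fin 3, ∀ t : ℝ, t₀ ≤ t →
      HasDerivWithinAt (g i j)
        ((1 / τ) * ((1 - Pr) / 5 * (2 * g i i t + ∑ d, g i d t) - g i j t))
        (Set.Ici t₀) t) :
    ∀ i : Fin 3, ∀ t : ℝ, t₀ ≤ t →
      2 * g i i t + ∑ d, g i d t =
        (2 * g i i t₀ + ∑ d, g i d t₀) * Real.exp (-Pr * (t - t₀) / τ) :=
  shakhov_heat_flux_decay_general τ Pr t₀ g hg
end

section
/- Let τ > 0 and Pr be real constants, t₀ ∈ ℝ, and let g_{ij} : [t₀, ∞) → ℝ (for i, j ∈ {1,2,3}) be differentiable functions satisfying the collision-only Shakhov moment system g_{ij}'(t) = (1/τ)[((1 − Pr)/5) q_i(t) − g_{ij}(t)], where q_i(t) = 2 g_{ii}(t) + Σ_{d=1}^3 g_{id}(t). Then for all t ≥ t₀ and all i, j ∈ {1,2,3}, g_{ij}(t) = (1/5) q_i(t₀) exp(−Pr (t − t₀)/τ) − ((1/5) q_i(t₀) − g_{ij}(t₀)) exp(−(t − t₀)/τ). -/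
open Real

/-! Summing the equations with the weights of `q_i` shows that `q_i` itself solves the scalar
equation `q' = -(Pr/τ) q`. Each `g_{ij}` then relaxes at rate `1/τ` towards `q_i/5`, and
`g_{ij} - q_i/5` obeys `u' = -u/τ`. Both scalar equations are solved by noting that
`f(t) e^{-c t}` has zero right derivative, hence is constant. -/

theorem eq_mul_exp_of_hasDerivWithinAt_Ici {f : ℝ → ℝ} {t₀ c : ℝ}
    (hf : ∀ t, t₀ ≤ t → HasDerivWithinAt f (c * f t) (Set.Ici t₀) t) {t : ℝ} (ht : t₀ ≤ t) :
    f t = f t₀ * exp (c * (t - t₀)) := by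
  set h : ℝ → ℝ := fun s => f s * exp (-c * s)
  have hh : ∀ s, t₀ ≤ s → HasDerivWithinAt h 0 (Set.Ici t₀) s := fun s hs => by
    have hexp : HasDerivAt (fun s => exp (-c * s)) (exp (-c * s) * -c) s :=
      ((hasDerivAt_id s).const_mul (-c)).exp.congr_deriv (by simp)
    exact ((hf s hs).mul hexp.hasDerivWithinAt).congr_deriv (by ring)
  have h_const : h t = h t₀ :=
    constant_of_has_deriv_right_zero
      (fun s hs => ((hh s hs.1).continuousWithinAt).mono Set.Icc_subset_Ici_self)
      (fun s hs => (hh s hs.1).mono (Set.Ici_subset_Ici.2 hs.1)) t ⟨ht, le_rfl⟩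
  calc f t = h t * exp (c * t) := by simp only [h, mul_assoc, ← exp_add]; ring_nf; simp
    _ = h t₀ * exp (c * t) := by rw [h_const]
    _ = f t₀ * exp (c * (t - t₀)) := by simp only [h, mul_assoc, ← exp_add]; ring_nf

section WeightedRelaxation

variable {ι : Type*} [Fintype ι] {g : ι → ℝ → ℝ} {w : ι → ℝ} {k a t₀ : ℝ}

theorem hasDerivWithinAt_weighted_sum_of_relaxation
    (hg : ∀ j t, t₀ ≤ t →
      HasDerivWithinAt (g j) (k * (a * ∑ d, w d * g d t - g j t)) (Set.Ici t₀) t)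
    {t : ℝ} (ht : t₀ ≤ t) :
    HasDerivWithinAt (fun s => ∑ d, w d * g d s)
      (k * (a * ∑ d, w d - 1) * ∑ d, w d * g d t) (Set.Ici t₀) t := by
  refine (HasDerivWithinAt.fun_sum fun d _ => (hg d t ht).const_mul (w d)).congr_deriv ?_
  set q := ∑ d, w d * g d t
  calc ∑ d, w d * (k * (a * q - g d t))
      = ∑ d, (k * a * q * w d - k * (w d * g d t)) := Finset.sum_congr rfl fun _ _ => by ring
    _ = k * a * q * ∑ d, w d - k * q := by
      rw [Finset.sum_sub_distrib, ← Finset.mul_sum, ← Finset.mul_sum]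
    _ = k * (a * ∑ d, w d - 1) * q := by ring

theorem relaxation_solution (hW : ∑ d, w d ≠ 0)
    (hg : ∀ j t, t₀ ≤ t →
      HasDerivWithinAt (g j) (k * (a * ∑ d, w d * g d t - g j t)) (Set.Ici t₀) t)
    (j : ι) {t : ℝ} (ht : t₀ ≤ t) :
    g j t = (∑ d, w d * g d t₀) / (∑ d, w d) * exp (k * (a * ∑ d, w d - 1) * (t - t₀)) -
      ((∑ d, w d * g d t₀) / (∑ d, w d) - g j t₀) * exp (-k * (t - t₀)) := by
  set W := ∑ d, w d
  set q : ℝ → ℝ := fun s => ∑ d, w d * g d s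
  set μ := k * (a * W - 1)
  have hq : ∀ s, t₀ ≤ s → q s = q t₀ * exp (μ * (s - t₀)) :=
    fun s => eq_mul_exp_of_hasDerivWithinAt_Ici
      fun s hs => hasDerivWithinAt_weighted_sum_of_relaxation hg hs
  set u : ℝ → ℝ := fun s => g j s - q t₀ / W * exp (μ * (s - t₀))
  have hu : ∀ s, t₀ ≤ s → HasDerivWithinAt u (-k * u s) (Set.Ici t₀) s := fun s hs => by
    have hexp : HasDerivAt (fun s => exp (μ * (s - t₀))) (exp (μ * (s - t₀)) * μ) s :=
      (((hasDerivAt_id s).sub_const t₀).const_mul μ).exp.congr_deriv (by simp)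
    refine ((hg j s hs).sub (hexp.const_mul (q t₀ / W)).hasDerivWithinAt).congr_deriv ?_
    change k * (a * q s - g j s) - _ = _
    rw [hq s hs]
    simp only [u, μ]
    field_simp
    ring
  have hu_sol := eq_mul_exp_of_hasDerivWithinAt_Ici hu ht
  simp only [u, sub_self, mul_zero, exp_zero, mul_one] at hu_sol
  linear_combination hu_sol

end WeightedRelaxation

theorem sum_shakhov_weights_mul {n : ℕ} (i : Fin n) (x : Fin n → ℝ) :
    ∑ d, ((if d = i then 2 else 0) + 1) * x d = 2 * x i + ∑ d, x d := by
  simp [add_mul, Finset.sum_add_distrib, ite_mul]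

theorem shakhov_collision_solution_general (τ Pr t₀ : ℝ)
    (g : Fin 3 → Fin 3 → ℝ → ℝ)
    (hg : ∀ i j : Fin 3, ∀ t : ℝ, t₀ ≤ t →
      HasDerivWithinAt (g i j)
        ((1 / τ) * ((1 - Pr) / 5 * (2 * g i i t + ∑ d, g i d t) - g i j t))
        (Set.Ici t₀) t) :
    ∀ i j : Fin 3, ∀ t : ℝ, t₀ ≤ t →
      g i j t = (1 / 5) * (2 * g i i t₀ + ∑ d, g i d t₀) *
          Real.exp (-Pr * (t - t₀) / τ) -
        ((1 / 5) * (2 * g i i t₀ + ∑ d, g i d t₀) - g i j t₀) *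
          Real.exp (-(t - t₀) / τ) := by
  intro i j t ht
  set w : Fin 3 → ℝ := fun d => (if d = i then 2 else 0) + 1
  have hq : ∀ s, ∑ d, w d * g i d s = 2 * g i i s + ∑ d, g i d s :=
    fun s => sum_shakhov_weights_mul i (g i · s)
  have hW : ∑ d, w d = 5 := by
    have h := sum_shakhov_weights_mul i 1
    simp only [Pi.one_apply, mul_one] at h
    rw [h]
    norm_num
  have h := relaxation_solution (k := 1 / τ) (a := (1 - Pr) / 5) (by rw [hW]; norm_num)
    (fun j s hs => by rw [hq]; exact hg i j s hs) j ht
  rw [hq, hW] at h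
  rw [show -Pr * (t - t₀) / τ = 1 / τ * ((1 - Pr) / 5 * 5 - 1) * (t - t₀) by ring,
    show -(t - t₀) / τ = -(1 / τ) * (t - t₀) by ring, h]
  ring

/-- For solutions of the collision-only Shakhov moment system
`g_{ij}' = (1/τ)[((1−Pr)/5) q_i − g_{ij}]` with `q_i = 2g_{ii} + Σ_d g_{id}`,
`g_{ij}(t) = (1/5)q_i(t₀) e^{−Pr(t−t₀)/τ} − ((1/5)q_i(t₀) − g_{ij}(t₀)) e^{−(t−t₀)/τ}`. -/
theorem shakhov_collision_solution (τ Pr t₀ : ℝ) (hτ : 0 < τ)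
    (g : Fin 3 → Fin 3 → ℝ → ℝ)
    (hg : ∀ i j : Fin 3, ∀ t : ℝ, t₀ ≤ t →
      HasDerivWithinAt (g i j)
        ((1 / τ) * ((1 - Pr) / 5 * (2 * g i i t + ∑ d, g i d t) - g i j t))
        (Set.Ici t₀) t) :
    ∀ i j : Fin 3, ∀ t : ℝ, t₀ ≤ t →
      g i j t = (1 / 5) * (2 * g i i t₀ + ∑ d, g i d t₀) *
          Real.exp (-Pr * (t - t₀) / τ) -
        ((1 / 5) * (2 * g i i t₀ + ∑ d, g i d t₀) - g i j t₀) *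
          Real.exp (-(t - t₀) / τ) :=
  shakhov_collision_solution_general τ Pr t₀ g hg
end
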